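/- arXiv:math-ph/0408059 — 6 statements merged into one kernel-verified Lean document; each statement's English description precedes it below -/
import Mathlib

section
/- Let λ be an n×n invertible diagonal matrix with diagonal entries λ_i, and τ an arbitrary n×n matrix. For integers q_1,...,q_r ≥ 0, define ε_q by [ε_q]_{ip} = (λ_p/λ_i)^q · τ_{ip}/λ_i. Then λ · ε_{q_1} · ε_{q_2} ⋯ ε_{q_r} · λ = λ² · ε_{q_1+1} · ε_{q_2+1} ⋯ ε_{q_r+1} as matrices. -/
/-- The matrix `ε_q` with entries `(λ_p/λ_i)^q · τ_{ip} / λ_i`. -/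
noncomputable def eps {n : ℕ} (l : Fin n → ℂ) (τ : Matrix (Fin n) (Fin n) ℂ) (q : ℕ) :
    Matrix (Fin n) (Fin n) ℂ :=
  Matrix.of fun i p => (l p / l i) ^ q * τ i p / l i

lemma eps_succ {n : ℕ} (l : Fin n → ℂ) (τ : Matrix (Fin n) (Fin n) ℂ)
    (hl : ∀ i, l i ≠ 0) (q : ℕ) :
    eps l τ (q + 1) =
      Matrix.diagonal (fun i => (l i)⁻¹) * eps l τ q * Matrix.diagonal l := by
  ext i p
  simp only [eps, Matrix.mul_diagonal, Matrix.diagonal_mul, Matrix.of_apply]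
  field_simp
  ring

theorem stmt1 (n : ℕ) (l : Fin n → ℂ) (τ : Matrix (Fin n) (Fin n) ℂ)
    (hl : ∀ i, l i ≠ 0) (qs : List ℕ) :
    Matrix.diagonal l * (qs.map (eps l τ)).prod * Matrix.diagonal l =
      Matrix.diagonal l ^ 2 * (qs.map (fun q => eps l τ (q + 1))).prod := by
  have key : (qs.map (fun q => eps l τ (q + 1))).prod =
      Matrix.diagonal (fun i => (l i)⁻¹) * (qs.map (eps l τ)).prod * Matrix.diagonal l := by
    induction qs with
    | nil =>
      simp [Matrix.diagonal_mul_diagonal]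
      rw [← Matrix.diagonal_one]
      exact congrArg Matrix.diagonal (funext fun i => (inv_mul_cancel₀ (hl i)).symm)
    | cons q qs ih =>
      simp only [List.map_cons, List.prod_cons, ih, eps_succ l τ hl q]
      have h : Matrix.diagonal l * Matrix.diagonal (fun i => (l i)⁻¹) =
          (1 : Matrix (Fin n) (Fin n) ℂ) := by
        rw [Matrix.diagonal_mul_diagonal, ← Matrix.diagonal_one]
        exact congrArg Matrix.diagonal (funext fun i => mul_inv_cancel₀ (hl i))
      rw [show Matrix.diagonal (fun i => (l i)⁻¹) * eps l τ q * Matrix.diagonal l *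
          (Matrix.diagonal (fun i => (l i)⁻¹) * (qs.map (eps l τ)).prod * Matrix.diagonal l)
          = Matrix.diagonal (fun i => (l i)⁻¹) * eps l τ q *
            (Matrix.diagonal l * Matrix.diagonal (fun i => (l i)⁻¹)) *
            (qs.map (eps l τ)).prod * Matrix.diagonal l by noncomm_ring, h]
      noncomm_ring
  rw [key, sq]
  have h : Matrix.diagonal l * Matrix.diagonal (fun i => (l i)⁻¹) =
      (1 : Matrix (Fin n) (Fin n) ℂ) := by
    rw [Matrix.diagonal_mul_diagonal, ← Matrix.diagonal_one]
    exact congrArg Matrix.diagonal (funext fun i => mul_inv_cancel₀ (hl i))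
  rw [show Matrix.diagonal l * Matrix.diagonal l *
      (Matrix.diagonal (fun i => (l i)⁻¹) * (qs.map (eps l τ)).prod * Matrix.diagonal l)
      = Matrix.diagonal l * (Matrix.diagonal l * Matrix.diagonal (fun i => (l i)⁻¹)) *
        (qs.map (eps l τ)).prod * Matrix.diagonal l by noncomm_ring, h]
  noncomm_ring
end

section
/- Let λ be an n×n invertible diagonal matrix and τ an arbitrary n×n matrix, with ε_q defined by [ε_q]_{ip} = (λ_p/λ_i)^q τ_{ip}/λ_i. Then for every p ≥ 1, (λ+τ)^p = λ^p · (I + Σ_{k≥1} Σ_{0 ≤ q_1 < q_2 < ⋯ < q_k ≤ p-1} ε_{q_k} ε_{q_{k-1}} ⋯ ε_{q_1}), where the sum over k ranges over all k ≥ 1 and the inner sum runs over strictly increasing k-tuples (q_1, …, q_k) in {0, …, p-1}. -/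
/-- The product `ε_{q_k} ⋯ ε_{q_1}` over a finite set `s = {q_1 < q_2 < ⋯ < q_k}`,
factors taken in decreasing order of the index. -/
noncomputable def epsProd {n : ℕ} (l : Fin n → ℂ) (τ : Matrix (Fin n) (Fin n) ℂ) (s : Finset ℕ) :
    Matrix (Fin n) (Fin n) ℂ :=
  ((s.sort (· ≤ ·)).reverse.map (eps l τ)).prod

lemma sort_insert_max {p : ℕ} {s : Finset ℕ} (hs : ∀ b ∈ s, b < p) :
    (insert p s).sort (· ≤ ·) = s.sort (· ≤ ·) ++ [p] := by
  have hps : p ∉ s := fun h => lt_irrefl p (hs p h)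
  apply (fun h1 h2 h3 => List.Perm.eq_of_pairwise' (r := fun a b : ℕ => a ≤ b) h2 h3 h1)
  · apply Multiset.coe_eq_coe.mp
    rw [Finset.sort_eq, Finset.insert_val_of_notMem hps]
    have h2 := Finset.sort_eq (α := ℕ) s (· ≤ ·)
    rw [← h2]
    exact Multiset.coe_eq_coe.mpr (List.perm_append_singleton p _).symm
  · exact Finset.pairwise_sort _ _
  · rw [List.pairwise_append]
    refine ⟨Finset.pairwise_sort _ _, List.pairwise_singleton _ p, ?_⟩
    intro a ha b hb
    simp at hb
    subst hb
    exact le_of_lt (hs a ((Finset.mem_sort _).mp ha))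

lemma epsProd_insert {n : ℕ} (l : Fin n → ℂ) (τ : Matrix (Fin n) (Fin n) ℂ)
    {p : ℕ} {s : Finset ℕ} (hs : ∀ b ∈ s, b < p) :
    epsProd l τ (insert p s) = eps l τ p * epsProd l τ s := by
  unfold epsProd
  rw [sort_insert_max hs]
  simp

lemma diag_pow_mul_eps {n : ℕ} (l : Fin n → ℂ) (τ : Matrix (Fin n) (Fin n) ℂ)
    (hl : ∀ i, l i ≠ 0) (p : ℕ) :
    Matrix.diagonal l ^ (p + 1) * eps l τ p = τ * Matrix.diagonal l ^ p := by
  rw [Matrix.diagonal_pow, Matrix.diagonal_pow]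
  ext i j
  rw [Matrix.diagonal_mul, Matrix.mul_diagonal]
  simp only [eps, Matrix.of_apply, Pi.pow_apply]
  field_simp [hl i, hl j]
  rw [div_pow, pow_succ, mul_comm (l i ^ p) (l i), mul_assoc (l i), mul_div_cancel₀ _ (pow_ne_zero p (hl i))]
  ring

lemma key {n : ℕ} (l : Fin n → ℂ) (τ : Matrix (Fin n) (Fin n) ℂ)
    (hl : ∀ i, l i ≠ 0) (p : ℕ) :
    (Matrix.diagonal l + τ) ^ p =
      Matrix.diagonal l ^ p * ∑ s ∈ (Finset.range p).powerset, epsProd l τ s := by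
  induction p with
  | zero => simp [epsProd]
  | succ p ih =>
    have hnot : p ∉ Finset.range p := by simp
    rw [Finset.range_add_one, Finset.sum_powerset_insert hnot]
    have hrw : ∀ t ∈ (Finset.range p).powerset,
        epsProd l τ (insert p t) = eps l τ p * epsProd l τ t := by
      intro t ht
      exact epsProd_insert l τ (fun b hb => Finset.mem_range.mp
        (Finset.mem_powerset.mp ht hb))
    rw [Finset.sum_congr rfl hrw, ← Finset.mul_sum]
    set S := ∑ s ∈ (Finset.range p).powerset, epsProd l τ s with hS
    calc (Matrix.diagonal l + τ) ^ (p + 1)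
        = (Matrix.diagonal l + τ) * (Matrix.diagonal l + τ) ^ p := pow_succ' _ p
      _ = Matrix.diagonal l * (Matrix.diagonal l ^ p * S) +
            τ * (Matrix.diagonal l ^ p * S) := by rw [ih, add_mul]
      _ = Matrix.diagonal l ^ (p + 1) * S +
            (Matrix.diagonal l ^ (p + 1) * eps l τ p) * S := by
          rw [diag_pow_mul_eps l τ hl p, pow_succ', mul_assoc, mul_assoc]
      _ = Matrix.diagonal l ^ (p + 1) * (S + eps l τ p * S) := by
          rw [mul_add, mul_assoc]

theorem stmt2 (n : ℕ) (l : Fin n → ℂ) (τ : Matrix (Fin n) (Fin n) ℂ)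
    (hl : ∀ i, l i ≠ 0) (p : ℕ) (hp : 1 ≤ p) :
    (Matrix.diagonal l + τ) ^ p =
      Matrix.diagonal l ^ p *
        (1 + ∑ k ∈ Finset.Icc 1 p,
          ∑ s ∈ (Finset.range p).powerset.filter (fun s => s.card = k),
            epsProd l τ s) := by
  rw [key l τ hl p]
  congr 1
  have hmaps : ∀ s ∈ (Finset.range p).powerset, s.card ∈ Finset.range (p + 1) := by
    intro s hs
    simp only [Finset.mem_range, Nat.lt_succ_iff]
    calc s.card ≤ (Finset.range p).card := Finset.card_le_card (Finset.mem_powerset.mp hs)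
      _ = p := Finset.card_range p
  rw [← Finset.sum_fiberwise_of_maps_to hmaps]
  have hrange : Finset.range (p + 1) = insert 0 (Finset.Icc 1 p) := by
    ext x; simp [Nat.lt_succ_iff]; omega
  rw [hrange, Finset.sum_insert (by simp)]
  congr 1
  have : (Finset.range p).powerset.filter (fun s => s.card = 0) = {∅} := by
    ext s
    simp only [Finset.mem_filter, Finset.mem_powerset, Finset.card_eq_zero,
      Finset.mem_singleton]
    constructor
    · tauto
    · rintro rfl; simp
  rw [this]
  simp [epsProd]
end

section
/- Define B^{(k,n)}(μ_0, μ_1, …, μ_k) = Σ_{0 ≤ q_1 < q_2 < ⋯ < q_k ≤ n-1} (μ_1/μ_0)^{q_k} (μ_2/μ_1)^{q_{k-1}} ⋯ (μ_k/μ_{k-1})^{q_1} / (μ_0 μ_1 ⋯ μ_{k-1}) for nonzero complex numbers μ_i. If μ_0 ≠ μ_1, then B^{(k+1,n)}(μ_0, μ_1, …, μ_{k+1}) = (B^{(k,n)}(μ_0, μ_2, …, μ_{k+1}) − (μ_1/μ_0)^n · B^{(k,n)}(μ_1, μ_2, …, μ_{k+1})) / (μ_0 − μ_1). -/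
open Finset in
/-- The coefficient `B^{(k,n)}(μ_0,…,μ_k)`, a sum over strictly increasing
`k`-tuples `q_1 < ⋯ < q_k` in `{0,…,n-1}` of
`(μ_1/μ_0)^{q_k} (μ_2/μ_1)^{q_{k-1}} ⋯ (μ_k/μ_{k-1})^{q_1} / (μ_0 ⋯ μ_{k-1})`. -/
noncomputable def Bcoef (k n : ℕ) (μ : Fin (k + 1) → ℂ) : ℂ :=
  ∑ q ∈ Finset.univ.filter (fun q : Fin k → Fin n => StrictMono q),
    (∏ j : Fin k, (μ j.succ / μ j.castSucc) ^ ((q (Fin.rev j) : ℕ))) /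
      ∏ j : Fin k, μ j.castSucc

/-!
Induction on `n`. Splitting the strictly increasing tuples in `{0, …, n}` according to whether
their largest entry is `n` gives
`B^{(k+1,n+1)}(μ) = B^{(k+1,n)}(μ) + (μ_1/μ_0)^n / μ_0 · B^{(k,n)}(μ_1, …, μ_{k+1})`,
and the claimed identity, multiplied out by `μ_0 - μ_1`, satisfies the same recurrence.
-/

open Finset

lemma Fin.strictMono_snoc {α : Type*} [Preorder α] {k : ℕ} {p : Fin k → α} {x : α}
    (hp : StrictMono p) (hx : ∀ i, p i < x) : StrictMono (Fin.snoc p x : Fin (k + 1) → α) := by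
  intro a b hab
  induction b using Fin.lastCases with
  | last =>
    obtain ⟨a, rfl⟩ := Fin.exists_castSucc_eq.mpr hab.ne
    simpa using hx a
  | cast b =>
    obtain ⟨a, rfl⟩ := Fin.exists_castSucc_eq.mpr (hab.trans (Fin.castSucc_lt_last b)).ne
    simpa using hp (Fin.castSucc_lt_castSucc_iff.mp hab)

lemma sum_filter_strictMono_last_ne {M : Type*} [AddCommMonoid M] (k n : ℕ)
    (f : (Fin (k + 1) → Fin (n + 1)) → M) :
    ∑ q ∈ univ.filter (fun q : Fin (k + 1) → Fin (n + 1) => StrictMono q)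
        with q (Fin.last k) ≠ Fin.last n, f q =
      ∑ q ∈ univ.filter (fun q : Fin (k + 1) → Fin n => StrictMono q),
        f (Fin.castSucc ∘ q) := by
  refine (sum_nbij (Fin.castSucc ∘ ·) ?_ ?_ ?_ fun _ _ => rfl).symm
  · intro q hq
    simp only [mem_filter, mem_univ, true_and] at hq ⊢
    exact ⟨Fin.strictMono_castSucc.comp hq, (Fin.castSucc_lt_last _).ne⟩
  · exact fun q _ q' _ h => funext fun j => Fin.castSucc_injective _ (congrFun h j)
  · intro Q hQ
    simp only [mem_coe, mem_filter, mem_univ, true_and] at hQ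
    have hne : ∀ j, Q j ≠ Fin.last n := fun j =>
      ((hQ.1.monotone (Fin.le_last j)).trans_lt (Fin.lt_last_iff_ne_last.mpr hQ.2)).ne
    refine ⟨fun j => (Q j).castPred (hne j), ?_, funext fun j => Fin.castSucc_castPred _ _⟩
    simp only [mem_coe, mem_filter, mem_univ, true_and]
    exact fun a b hab => Fin.castPred_lt_castPred_iff.mpr (hQ.1 hab)

lemma sum_filter_strictMono_last_eq {M : Type*} [AddCommMonoid M] (k n : ℕ)
    (f : (Fin (k + 1) → Fin (n + 1)) → M) :
    ∑ q ∈ univ.filter (fun q : Fin (k + 1) → Fin (n + 1) => StrictMono q)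
        with q (Fin.last k) = Fin.last n, f q =
      ∑ q ∈ univ.filter (fun q : Fin k → Fin n => StrictMono q),
        f (Fin.snoc (Fin.castSucc ∘ q) (Fin.last n)) := by
  refine (sum_nbij (fun q => (Fin.snoc (Fin.castSucc ∘ q) (Fin.last n) : Fin (k + 1) → _))
    ?_ ?_ ?_ fun _ _ => rfl).symm
  · intro q hq
    simp only [mem_filter, mem_univ, true_and] at hq ⊢
    refine ⟨Fin.strictMono_snoc (Fin.strictMono_castSucc.comp hq) fun i => ?_, by simp⟩
    exact Fin.castSucc_lt_last _
  · intro q _ q' _ h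
    funext j
    simpa using congrFun h j.castSucc
  · intro Q hQ
    simp only [mem_coe, mem_filter, mem_univ, true_and] at hQ
    have hne : ∀ j : Fin k, Q j.castSucc ≠ Fin.last n := fun j =>
      hQ.2 ▸ (hQ.1 (Fin.castSucc_lt_last j)).ne
    refine ⟨fun j : Fin k => (Q j.castSucc).castPred (hne j), ?_, ?_⟩
    · simp only [mem_coe, mem_filter, mem_univ, true_and]
      intro a b hab
      exact Fin.castPred_lt_castPred_iff.mpr (hQ.1 (Fin.castSucc_lt_castSucc_iff.mpr hab))
    · funext j
      induction j using Fin.lastCases <;> simp [hQ.2]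

lemma sum_filter_strictMono_fin_succ {M : Type*} [AddCommMonoid M] (k n : ℕ)
    (f : (Fin (k + 1) → Fin (n + 1)) → M) :
    ∑ q ∈ univ.filter (fun q : Fin (k + 1) → Fin (n + 1) => StrictMono q), f q =
      ∑ q ∈ univ.filter (fun q : Fin (k + 1) → Fin n => StrictMono q),
        f (Fin.castSucc ∘ q) +
      ∑ q ∈ univ.filter (fun q : Fin k → Fin n => StrictMono q),
        f (Fin.snoc (Fin.castSucc ∘ q) (Fin.last n)) := by
  rw [← sum_filter_not_add_sum_filter _ (fun q => q (Fin.last k) = Fin.last n),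
    sum_filter_strictMono_last_ne, sum_filter_strictMono_last_eq]

lemma Bcoef_zero_left (n : ℕ) (μ : Fin 1 → ℂ) : Bcoef 0 n μ = 1 := by
  simp [Bcoef, Subsingleton.strictMono]

lemma Bcoef_succ_zero (k : ℕ) (μ : Fin (k + 2) → ℂ) : Bcoef (k + 1) 0 μ = 0 := by
  simp [Bcoef]

lemma Bcoef_succ_right (k n : ℕ) (μ : Fin (k + 2) → ℂ) :
    Bcoef (k + 1) (n + 1) μ =
      Bcoef (k + 1) n μ + (μ 1 / μ 0) ^ n / μ 0 * Bcoef k n (Fin.tail μ) := by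
  rw [Bcoef, sum_filter_strictMono_fin_succ, Bcoef, Bcoef, mul_sum]
  congr 1
  refine sum_congr rfl fun q _ => ?_
  simp only [Fin.prod_univ_succ, Fin.rev_zero, Fin.rev_succ, Fin.snoc_last, Fin.snoc_castSucc,
    Function.comp_apply, Fin.val_last, Fin.val_castSucc, Fin.succ_zero_eq_one, Fin.castSucc_zero]
  simp only [Fin.tail, Fin.succ_castSucc]
  ring

lemma Bcoef_succ_mul_sub (k n : ℕ) (μ : Fin (k + 2) → ℂ) (h0 : μ 0 ≠ 0)
    (h1 : μ 1 ≠ 0) :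
    Bcoef (k + 1) n μ * (μ 0 - μ 1) =
      Bcoef k n (Fin.cons (μ 0) fun j : Fin k => μ j.succ.succ)
        - (μ 1 / μ 0) ^ n * Bcoef k n (Fin.tail μ) := by
  induction n with
  | zero =>
    cases k <;> simp [Bcoef_zero_left, Bcoef_succ_zero]
  | succ n ih =>
    cases k with
    | zero =>
      rw [Bcoef_succ_right, add_mul, ih]
      simp only [Bcoef_zero_left, div_pow]
      field_simp
      ring
    | succ k =>
      simp only [Bcoef_succ_right, Fin.cons_zero, Fin.cons_one, Fin.tail_cons]
      rw [add_mul, ih, show Fin.tail (Fin.tail μ) = fun j => μ j.succ.succ from rfl]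
      simp only [Fin.tail, Fin.succ_zero_eq_one, Fin.succ_one_eq_two, div_pow]
      field_simp
      ring

theorem stmt4 (k n : ℕ) (μ : Fin (k + 2) → ℂ) (hμ : ∀ j, μ j ≠ 0)
    (h01 : μ 0 ≠ μ 1) :
    Bcoef (k + 1) n μ =
      (Bcoef k n (Fin.cons (μ 0) fun j : Fin k => μ j.succ.succ)
        - (μ 1 / μ 0) ^ n * Bcoef k n (Fin.tail μ)) / (μ 0 - μ 1) := by
  rw [eq_div_iff (sub_ne_zero.mpr h01)]
  exact Bcoef_succ_mul_sub k n μ (hμ 0) (hμ 1)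
end

section
/- Let f be a polynomial (or entire function), and let λ be an n×n diagonal matrix with diagonal entries λ_i, τ an arbitrary n×n matrix. Then the first-order term in τ of f(λ+τ) is given by: d/dt f(λ + tτ)|_{t=0} has (i,p) entry A^{(1)}_{ip} · τ_{ip}, where A^{(1)}_{ip} = (f(λ_i) − f(λ_p))/(λ_i − λ_p) if λ_i ≠ λ_p, and A^{(1)}_{ip} = f'(λ_i) if λ_i = λ_p. -/
/-!
Both sides are additive in `f`. Since `f(λ)` is diagonal, the entrywise product rule for
`t ↦ f(λ + tτ) g(λ + tτ)` produces exactly the Leibniz rule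
`[fg](x, y) = [f](x, y) g(y) + f(x) [g](x, y)` of divided differences, so the claim passes from
`f` and `g` to `f g`; it then only has to be checked for constants and for `X`.
-/

open Polynomial Matrix

namespace Polynomial

variable {𝕜 : Type*} [Field 𝕜] [DecidableEq 𝕜]

/-- The first divided difference `A⁽¹⁾` of the paper. -/
noncomputable def divDiff (f : 𝕜[X]) (x y : 𝕜) : 𝕜 :=
  if x = y then f.derivative.eval x else (f.eval x - f.eval y) / (x - y)

@[simp]
theorem divDiff_C (a x y : 𝕜) : divDiff (C a) x y = 0 := by
  simp [divDiff]

@[simp]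
theorem divDiff_X (x y : 𝕜) : divDiff X x y = 1 := by
  by_cases h : x = y
  · simp [divDiff, h]
  · simp [divDiff, h, sub_ne_zero.mpr h]

theorem divDiff_add (f g : 𝕜[X]) (x y : 𝕜) :
    divDiff (f + g) x y = divDiff f x y + divDiff g x y := by
  by_cases h : x = y
  · simp [divDiff, h]
  · simp only [divDiff, if_neg h, eval_add]
    ring

theorem divDiff_mul (f g : 𝕜[X]) (x y : 𝕜) :
    divDiff (f * g) x y = divDiff f x y * g.eval y + f.eval x * divDiff g x y := by
  by_cases h : x = y
  · subst h
    simp [divDiff]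
  · have hxy : x - y ≠ 0 := sub_ne_zero.mpr h
    simp only [divDiff, if_neg h, eval_mul]
    field_simp
    ring

end Polynomial

namespace Matrix

theorem aeval_diagonal {R n : Type*} [CommSemiring R] [Fintype n] [DecidableEq n]
    (f : R[X]) (d : n → R) : aeval (diagonal d) f = diagonal fun i => f.eval (d i) := by
  rw [← diagonalAlgHom_apply R, aeval_algHom_apply, aeval_pi]
  rfl

variable {𝕜 n : Type*} [NontriviallyNormedField 𝕜] [Fintype n]

theorem hasDerivAt_mul_apply {F G : 𝕜 → Matrix n n 𝕜} {F' G' : Matrix n n 𝕜} {t₀ : 𝕜}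
    (hF : ∀ i j, HasDerivAt (fun t => F t i j) (F' i j) t₀)
    (hG : ∀ i j, HasDerivAt (fun t => G t i j) (G' i j) t₀) (i k : n) :
    HasDerivAt (fun t => (F t * G t) i k) ((F' * G t₀ + F t₀ * G') i k) t₀ := by
  simp only [mul_apply, add_apply, ← Finset.sum_add_distrib]
  exact HasDerivAt.fun_sum fun j _ => (hF i j).fun_mul (hG j k)

variable [DecidableEq n] [DecidableEq 𝕜] {d : n → 𝕜} {τ : Matrix n n 𝕜}

theorem hasDerivAt_aeval_diagonal_add_smul_apply_mul {f g : 𝕜[X]}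
    (hf : ∀ i k, HasDerivAt (fun t : 𝕜 => aeval (diagonal d + t • τ) f i k)
      (divDiff f (d i) (d k) * τ i k) 0)
    (hg : ∀ i k, HasDerivAt (fun t : 𝕜 => aeval (diagonal d + t • τ) g i k)
      (divDiff g (d i) (d k) * τ i k) 0) (i k : n) :
    HasDerivAt (fun t : 𝕜 => aeval (diagonal d + t • τ) (f * g) i k)
      (divDiff (f * g) (d i) (d k) * τ i k) 0 := by
  have h := hasDerivAt_mul_apply (F' := of fun i k => divDiff f (d i) (d k) * τ i k)
    (G' := of fun i k => divDiff g (d i) (d k) * τ i k) hf hg i k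
  simp only [zero_smul, add_zero, aeval_diagonal, add_apply, mul_diagonal, diagonal_mul,
    of_apply] at h
  simp only [map_mul]
  convert h using 1
  rw [divDiff_mul]
  ring

theorem hasDerivAt_aeval_diagonal_add_smul_apply (f : 𝕜[X]) (i k : n) :
    HasDerivAt (fun t : 𝕜 => aeval (diagonal d + t • τ) f i k)
      (divDiff f (d i) (d k) * τ i k) 0 := by
  induction f using Polynomial.induction_on generalizing i k with
  | C a => simpa using hasDerivAt_const (0 : 𝕜) (algebraMap 𝕜 (Matrix n n 𝕜) a i k)
  | add f g hf hg =>
    simpa only [map_add, add_apply, divDiff_add, add_mul] using (hf i k).fun_add (hg i k)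
  | monomial m a ih =>
    have hX : ∀ i k, HasDerivAt (fun t : 𝕜 => aeval (diagonal d + t • τ) (X : 𝕜[X]) i k)
        (divDiff X (d i) (d k) * τ i k) 0 := fun i k => by
      simpa using ((hasDerivAt_id (0 : 𝕜)).mul_const (τ i k)).const_add (d i * (1 : Matrix n n 𝕜) i k)
    rw [pow_succ, ← mul_assoc]
    exact hasDerivAt_aeval_diagonal_add_smul_apply_mul ih hX i k

end Matrix

theorem stmt5 (N : ℕ) (f : Polynomial ℂ) (l : Fin N → ℂ)
    (τ : Matrix (Fin N) (Fin N) ℂ) (i p : Fin N) :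
    HasDerivAt
      (fun t : ℂ => (Polynomial.aeval (Matrix.diagonal l + t • τ) f) i p)
      ((if l i = l p then f.derivative.eval (l i)
        else (f.eval (l i) - f.eval (l p)) / (l i - l p)) * τ i p) 0 :=
  hasDerivAt_aeval_diagonal_add_smul_apply f i p
end

section
/- Cauchy integral representation of divided differences: for f holomorphic on an open set containing the closed disc of radius R, and points λ_0, …, λ_k inside the disc of radius R that are pairwise distinct, (1/(2πi)) ∮_{|z|=R} f(z)/((z−λ_0)⋯(z−λ_k)) dz = Σ_{j=0}^{k} f(λ_j)/Π_{l≠j}(λ_j − λ_l), i.e. the contour integral equals the k-th divided difference f[λ_0,…,λ_k]. -/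
/-!
Partial fractions turn `1 / ∏ⱼ (z - λⱼ)` into `∑ⱼ wⱼ / (z - λⱼ)`, where `wⱼ = ∏_{m ≠ j} (λⱼ - λₘ)⁻¹`
are the barycentric weights of the nodes. Integrating term by term and applying Cauchy's integral
formula to each summand `wⱼ f(z) / (z - λⱼ)` gives `2πi ∑ⱼ wⱼ f(λⱼ)`.
-/

open Complex Real Metric Finset Lagrange

theorem Lagrange.inv_prod_sub_eq_sum_nodalWeight_mul_inv_sub {F ι : Type*} [Field F]
    [DecidableEq ι] {s : Finset ι} {v : ι → F} {x : F} (hvs : Set.InjOn v s) (hs : s.Nonempty)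
    (hx : ∀ i ∈ s, x ≠ v i) :
    (∏ i ∈ s, (x - v i))⁻¹ = ∑ i ∈ s, nodalWeight s v i * (x - v i)⁻¹ := by
  -- the first barycentric form of the interpolant of the constant function `1`
  have h := eval_interpolate_not_at_node (1 : ι → F) hx
  simp only [interpolate_one hvs hs, Polynomial.eval_one, eval_nodal, Pi.one_apply,
    mul_one] at h
  exact (eq_inv_of_mul_eq_one_right h.symm).symm

theorem DifferentiableOn.circleIntegral_inv_prod_sub_smul {E : Type*} [NormedAddCommGroup E]
    [NormedSpace ℂ E] [CompleteSpace E] {ι : Type*} [DecidableEq ι] {f : ℂ → E} {c : ℂ} {R : ℝ}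
    (hf : DifferentiableOn ℂ f (closedBall c R)) {s : Finset ι} {v : ι → ℂ}
    (hvs : Set.InjOn v s) (hs : s.Nonempty) (hv : ∀ i ∈ s, v i ∈ ball c R) :
    (∮ z in C(c, R), (∏ i ∈ s, (z - v i))⁻¹ • f z) =
      (2 * π * I : ℂ) • ∑ i ∈ s, nodalWeight s v i • f (v i) := by
  obtain ⟨i₀, hi₀⟩ := hs
  have hR : 0 < R := nonempty_ball.1 ⟨_, hv i₀ hi₀⟩
  have hv_off : ∀ i ∈ s, ∀ z ∈ sphere c R, z ≠ v i := fun i hi z hz h ↦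
    (mem_ball.1 (hv i hi)).ne (mem_sphere.1 (h ▸ hz))
  have hintegrable : ∀ i ∈ s, CircleIntegrable (fun z ↦ nodalWeight s v i • (z - v i)⁻¹ • f z) c R :=
    fun i hi ↦ ContinuousOn.circleIntegrable hR.le <| continuousOn_const.smul <|
      ((continuousOn_id.sub continuousOn_const).inv₀ fun z hz ↦
        sub_ne_zero.2 (hv_off i hi z hz)).smul
      (hf.continuousOn.mono sphere_subset_closedBall)
  calc (∮ z in C(c, R), (∏ i ∈ s, (z - v i))⁻¹ • f z)
      = ∮ z in C(c, R), ∑ i ∈ s, nodalWeight s v i • (z - v i)⁻¹ • f z := by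
        refine circleIntegral.integral_congr hR.le fun z hz ↦ ?_
        rw [inv_prod_sub_eq_sum_nodalWeight_mul_inv_sub hvs ⟨i₀, hi₀⟩
          fun i hi ↦ hv_off i hi z hz, sum_smul]
        simp only [mul_smul]
    _ = ∑ i ∈ s, nodalWeight s v i • ∮ z in C(c, R), (z - v i)⁻¹ • f z := by
        rw [circleIntegral.integral_fun_sum hintegrable]
        exact sum_congr rfl fun i _ ↦ circleIntegral.integral_smul _ _ _ _
    _ = (2 * π * I : ℂ) • ∑ i ∈ s, nodalWeight s v i • f (v i) := by
        rw [smul_sum]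
        refine sum_congr rfl fun i hi ↦ ?_
        rw [hf.circleIntegral_sub_inv_smul (hv i hi), smul_comm]

theorem stmt11_general (f : ℂ → ℂ) (R : ℝ) (s : Set ℂ)
    (hball : Metric.closedBall (0 : ℂ) R ⊆ s) (hf : DifferentiableOn ℂ f s)
    (k : ℕ) (l : Fin (k + 1) → ℂ) (hl : Function.Injective l)
    (hlR : ∀ j, ‖l j‖ < R) :
    (2 * π * I)⁻¹ * (∮ z in C(0, R), f z / ∏ j : Fin (k + 1), (z - l j)) =
      ∑ j : Fin (k + 1), f (l j) / ∏ m ∈ Finset.univ.erase j, (l j - l m) := by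
  have hcauchy := (hf.mono hball).circleIntegral_inv_prod_sub_smul hl.injOn univ_nonempty
    fun j _ ↦ mem_ball_zero_iff.2 (hlR j)
  simp only [smul_eq_mul, ← div_eq_inv_mul] at hcauchy
  rw [hcauchy, inv_mul_cancel_left₀ two_pi_I_ne_zero]
  refine sum_congr rfl fun j _ ↦ ?_
  rw [nodalWeight, prod_inv_distrib, ← div_eq_inv_mul]

theorem stmt11 (f : ℂ → ℂ) (R : ℝ) (s : Set ℂ) (hs : IsOpen s)
    (hball : Metric.closedBall (0 : ℂ) R ⊆ s) (hf : DifferentiableOn ℂ f s)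
    (k : ℕ) (l : Fin (k + 1) → ℂ) (hl : Function.Injective l)
    (hlR : ∀ j, ‖l j‖ < R) :
    (2 * π * I)⁻¹ * (∮ z in C(0, R), f z / ∏ j : Fin (k + 1), (z - l j)) =
      ∑ j : Fin (k + 1), f (l j) / ∏ m ∈ Finset.univ.erase j, (l j - l m) :=
  stmt11_general f R s hball hf k l hl hlR
end

section
/- Matrix Taylor expansion for polynomials via divided differences: let f be a polynomial, λ an N×N diagonal matrix with diagonal entries λ_i, and τ an N×N matrix. Then [f(λ+τ)]_{ip} = f(λ_i)δ_{ip} + Σ_{n≥1} Σ_{m_1,…,m_{n-1}} f[λ_i, λ_{m_1}, …, λ_{m_{n-1}}, λ_p] · τ_{i m_1} τ_{m_1 m_2} ⋯ τ_{m_{n-1} p}, where f[·] denotes the (possibly confluent) divided difference of f and the outer sum is finite (terminating at n = deg f). -/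
/-- Complete homogeneous symmetric polynomial `h_k` in the variables `x 0, …, x (m-1)`. -/
noncomputable def hsym {m : ℕ} (k : ℕ) (x : Fin m → ℂ) : ℂ :=
  ∑ a ∈ Finset.Nat.antidiagonalTuple m k, ∏ j : Fin m, x j ^ a j

/-- Confluent (Hermite) divided difference of a polynomial `f = Σ c_p z^p`:
`f[x_0,…,x_n] = Σ_p c_p h_{p-n}(x_0,…,x_n)`, with the monomial term zero for `n > p`. -/
noncomputable def dd {n : ℕ} (f : Polynomial ℂ) (x : Fin (n + 1) → ℂ) : ℂ :=
  ∑ p ∈ f.support, f.coeff p * (if n ≤ p then hsym (p - n) x else 0)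

/-- The index chain `i, m_1, …, m_n, p`. -/
def chain {N n : ℕ} (i p : Fin N) (m : Fin n → Fin N) : Fin (n + 2) → Fin N :=
  Fin.cons i (Fin.snoc m p)

/-!
Write `M = diagonal λ + τ`. Multiplying `M^q` on the left by `M` either multiplies entry `(i,p)`
by `λ_i` or prepends a step `i → k` weighted by `τ_{ik}`, so the coefficient of a chain
`i → m_1 → ⋯ → m_n → p` in `M^q` obeys
`c_{q+1}(x_0, …, x_n) = x_0 c_q(x_0, …, x_n) + c_q(x_1, …, x_n)` with `x = λ ∘ chain`. This is the
recursion of the complete homogeneous symmetric polynomials, i.e. of the divided differences of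
`z^q`; so the expansion holds for monomials, and for all polynomials by linearity in `f`.
-/

open Finset Polynomial Matrix

lemma hsym_zero {m : ℕ} (x : Fin m → ℂ) : hsym 0 x = 1 := by
  simp [hsym, Finset.Nat.antidiagonalTuple_zero_right]

lemma hsym_fin_one (k : ℕ) (x : Fin 1 → ℂ) : hsym k x = x 0 ^ k := by
  simp [hsym]

lemma hsym_eq_sum_antidiagonal {m : ℕ} (k : ℕ) (x : Fin (m + 1) → ℂ) :
    hsym k x = ∑ ab ∈ antidiagonal k, x 0 ^ ab.1 * hsym ab.2 (Fin.tail x) := by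
  change _ = ((List.Nat.antidiagonal k).map fun ab => x 0 ^ ab.1 * hsym ab.2 (Fin.tail x)).sum
  simp only [hsym, Finset.Nat.antidiagonalTuple, Multiset.Nat.antidiagonalTuple, Finset.sum_mk,
    Multiset.map_coe, Multiset.sum_coe, List.Nat.antidiagonalTuple, List.flatMap,
    List.map_flatten, List.sum_flatten, List.map_map]
  refine congrArg List.sum (List.map_congr_left fun ab _ => ?_)
  simp only [List.map_map, Function.comp_def, Fin.prod_univ_succ, Fin.cons_zero, Fin.cons_succ,
    Fin.tail, ← List.sum_map_mul_left]

lemma hsym_succ {m : ℕ} (k : ℕ) (x : Fin (m + 1) → ℂ) :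
    hsym (k + 1) x = x 0 * hsym k x + hsym (k + 1) (Fin.tail x) := by
  rw [hsym_eq_sum_antidiagonal, hsym_eq_sum_antidiagonal, Nat.sum_antidiagonal_succ, mul_sum]
  simp only [pow_zero, one_mul, pow_succ, mul_assoc, mul_comm (x 0), add_comm]

lemma dd_X_pow {n : ℕ} (q : ℕ) (x : Fin (n + 1) → ℂ) :
    dd (X ^ q) x = if n ≤ q then hsym (q - n) x else 0 := by
  simp [dd, support_X_pow, coeff_X_pow]

lemma dd_eq_sum_range {n : ℕ} (f : ℂ[X]) (x : Fin (n + 1) → ℂ) :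
    dd f x = ∑ d ∈ range (f.natDegree + 1), f.coeff d * dd (X ^ d) x := by
  simp only [dd_X_pow]
  exact f.sum_over_range (f := fun d c => c * if n ≤ d then hsym (d - n) x else 0)
    fun d => zero_mul _

lemma dd_X_pow_fin_one (q : ℕ) (x : Fin 1 → ℂ) : dd (X ^ q) x = x 0 ^ q := by
  simp [dd_X_pow, hsym_fin_one]

lemma dd_X_pow_succ {n : ℕ} (q : ℕ) (x : Fin (n + 2) → ℂ) :
    dd (X ^ (q + 1)) x = x 0 * dd (X ^ q) x + dd (X ^ q) (Fin.tail x) := by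
  simp only [dd_X_pow]
  rcases lt_trichotomy n q with h | rfl | h
  · rw [if_pos (by omega), if_pos (show n + 1 ≤ q from h), if_pos h.le,
      show q + 1 - (n + 1) = q - (n + 1) + 1 by omega, show q - n = q - (n + 1) + 1 by omega,
      hsym_succ]
  · simp [hsym_zero]
  · rw [if_neg (by omega), if_neg (by omega), if_neg (by omega), mul_zero, add_zero]

section Chains

variable {N : ℕ}

lemma chain_apply_zero {n : ℕ} (i p : Fin N) (m : Fin n → Fin N) : chain i p m 0 = i := rfl

lemma chain_cons {n : ℕ} (i p k : Fin N) (m : Fin n → Fin N) :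
    chain i p (Fin.cons k m) = Fin.cons i (chain k p m) := by
  unfold chain
  rw [← Fin.cons_snoc_eq_snoc_cons]

lemma chain_of_fin_zero (i p : Fin N) (m : Fin 0 → Fin N) : chain i p m = ![i, p] := by
  ext j; fin_cases j <;> rfl

def chainProd {R : Type*} [CommMonoid R] (τ : Matrix (Fin N) (Fin N) R) {n : ℕ} (i p : Fin N)
    (m : Fin n → Fin N) : R :=
  ∏ j : Fin (n + 1), τ (chain i p m j.castSucc) (chain i p m j.succ)

lemma chainProd_of_fin_zero {R : Type*} [CommMonoid R] (τ : Matrix (Fin N) (Fin N) R)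
    (i p : Fin N) (m : Fin 0 → Fin N) : chainProd τ i p m = τ i p := by
  simp [chainProd, chain_of_fin_zero]

lemma chainProd_cons {R : Type*} [CommMonoid R] (τ : Matrix (Fin N) (Fin N) R) {n : ℕ}
    (i p k : Fin N) (m : Fin n → Fin N) :
    chainProd τ i p (Fin.cons k m) = τ i k * chainProd τ k p m := by
  simp only [chainProd, Fin.prod_univ_succ, chain_cons]
  rfl

end Chains

lemma sum_fin_succ_fun {α M : Type*} [Fintype α] [AddCommMonoid M] {n : ℕ}
    (F : (Fin (n + 1) → α) → M) : ∑ m, F m = ∑ k, ∑ m : Fin n → α, F (Fin.cons k m) := by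
  rw [← Fintype.sum_prod_type']
  exact (Fintype.sum_equiv (Fin.consEquiv fun _ => α) _ _ fun _ => rfl).symm

lemma diagonal_add_mul_apply {ι R : Type*} [Fintype ι] [DecidableEq ι]
    [NonUnitalNonAssocSemiring R] (d : ι → R) (B A : Matrix ι ι R) (i p : ι) :
    ((diagonal d + B) * A) i p = d i * A i p + ∑ k, B i k * A k p := by
  rw [Matrix.add_mul, Matrix.add_apply, diagonal_mul, mul_apply]

section MatrixTaylor

variable {N : ℕ} (l : Fin N → ℂ) (τ : Matrix (Fin N) (Fin N) ℂ)

/-- `n` counts the intermediate indices `m_1, …, m_n`: this is the term of order `n + 1` in `τ`. -/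
noncomputable def taylorTerm (f : ℂ[X]) (n : ℕ) (i p : Fin N) : ℂ :=
  ∑ m : Fin n → Fin N, dd f (fun j => l (chain i p m j)) * chainProd τ i p m

lemma taylorTerm_eq_sum_range (f : ℂ[X]) (n : ℕ) (i p : Fin N) :
    taylorTerm l τ f n i p =
      ∑ d ∈ range (f.natDegree + 1), f.coeff d * taylorTerm l τ (X ^ d) n i p := by
  simp only [taylorTerm, dd_eq_sum_range f, mul_sum, sum_mul, mul_assoc]
  exact sum_comm

lemma taylorTerm_X_pow_of_le {q n : ℕ} (h : q ≤ n) (i p : Fin N) :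
    taylorTerm l τ (X ^ q) n i p = 0 := by
  simp [taylorTerm, dd_X_pow, show ¬ n + 1 ≤ q by omega]

lemma taylorTerm_X_pow_succ_zero (q : ℕ) (i p : Fin N) :
    taylorTerm l τ (X ^ (q + 1)) 0 i p = l i * taylorTerm l τ (X ^ q) 0 i p + τ i p * l p ^ q := by
  simp only [taylorTerm, univ_unique, sum_singleton, chain_of_fin_zero, chainProd_of_fin_zero,
    dd_X_pow_succ, dd_X_pow_fin_one, Fin.tail_def, cons_val_zero, cons_val_succ, cons_val_fin_one]
  ring

lemma taylorTerm_X_pow_succ_succ (q n : ℕ) (i p : Fin N) :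
    taylorTerm l τ (X ^ (q + 1)) (n + 1) i p =
      l i * taylorTerm l τ (X ^ q) (n + 1) i p + ∑ k, τ i k * taylorTerm l τ (X ^ q) n k p := by
  simp only [taylorTerm, dd_X_pow_succ, chain_apply_zero, add_mul, sum_add_distrib, mul_sum,
    mul_assoc]
  congr 1
  rw [sum_fin_succ_fun]
  refine sum_congr rfl fun k _ => sum_congr rfl fun m _ => ?_
  simp only [chain_cons, chainProd_cons, Fin.tail_def, Fin.cons_succ]
  ring

theorem diagonal_add_pow_apply {q K : ℕ} (hqK : q ≤ K) (i p : Fin N) :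
    ((diagonal l + τ) ^ q) i p =
      l i ^ q * (if i = p then 1 else 0) + ∑ n ∈ range K, taylorTerm l τ (X ^ q) n i p := by
  induction q generalizing K i p with
  | zero =>
    rw [pow_zero, one_apply, sum_eq_zero fun n _ => taylorTerm_X_pow_of_le l τ n.zero_le i p]
    simp
  | succ q ih =>
    obtain ⟨K, rfl⟩ : ∃ K', K = K' + 1 := ⟨K - 1, by omega⟩
    rw [pow_succ', diagonal_add_mul_apply, ih (K := K + 1) (by omega), sum_range_succ',
      sum_range_succ']
    simp only [ih (K := K) (by omega), taylorTerm_X_pow_succ_zero,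
      taylorTerm_X_pow_succ_succ, mul_add, sum_add_distrib, mul_sum, mul_ite, mul_one, mul_zero,
      sum_ite_eq', mem_univ, if_true]
    rw [sum_comm (s := univ), pow_succ']
    ring

end MatrixTaylor

theorem stmt15 (N : ℕ) (f : Polynomial ℂ) (l : Fin N → ℂ)
    (τ : Matrix (Fin N) (Fin N) ℂ) (i p : Fin N) :
    (Polynomial.aeval (Matrix.diagonal l + τ) f) i p =
      f.eval (l i) * (if i = p then 1 else 0)
      + ∑ n ∈ Finset.range f.natDegree, ∑ m : Fin n → Fin N,
          dd f (fun j => l (chain i p m j)) *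
            ∏ j : Fin (n + 1), τ (chain i p m j.castSucc) (chain i p m j.succ) := by
  change _ = _ + ∑ n ∈ range f.natDegree, taylorTerm l τ f n i p
  have hpow : ∀ d ∈ range (f.natDegree + 1), ((diagonal l + τ) ^ d) i p =
      l i ^ d * (if i = p then 1 else 0) +
        ∑ n ∈ range f.natDegree, taylorTerm l τ (X ^ d) n i p :=
    fun d hd => diagonal_add_pow_apply l τ (Nat.lt_succ_iff.mp (mem_range.mp hd)) i p
  rw [aeval_eq_sum_range, Matrix.sum_apply, eval_eq_sum_range]
  simp only [Matrix.smul_apply, smul_eq_mul, taylorTerm_eq_sum_range l τ f]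
  rw [sum_congr rfl fun d hd => congrArg _ (hpow d hd)]
  simp only [mul_add, sum_add_distrib, mul_sum, sum_mul, mul_assoc]
  rw [sum_comm (t := range f.natDegree)]
end
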